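/- arXiv:2402.17770 — 2 statements merged into one kernel-verified Lean document; each statement's English description precedes it below -/
import Mathlib

section
/- Let X be a compact complex 3-fold with holomorphic bundle E → X satisfying c₁^{BC}(E) = 0 and c₂^{BC}(E) = c₂^{BC}(X), and let (ω, h) solve the anomaly cancellation equation i∂∂̄ω = α'(Tr R_ω ∧ R_ω − Tr F_h ∧ F_h). Then the Aeppli class 𝔞(ω,h) = [ω − α' R₂[g,ĝ] + α' R₂[h,ĥ] − α' β̂] ∈ H^{1,1}_A(X,ℝ) is independent of the choice of reference metrics (ω̂, ĥ): for two choices of reference pairs, the difference −R₂[g,ĝ₁] + R₂[g,ĝ₂] + R₂[h,ĥ₁] − R₂[h,ĥ₂] − β̂₁ + β̂₂ vanishes identically. -/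
/-!
The Hodge-theoretic machinery of the Kodaira–Spencer operator
`E = ∂∂̄(∂∂̄)† + (∂∂̄)†∂∂̄ + (∂†∂̄)†∂†∂̄ + ∂†∂̄(∂†∂̄)† + ∂̄†∂̄ + ∂†∂`
acting on `(2,2)`-forms of a compact Hermitian complex manifold.  The spaces
`V p q` of `(p,q)`-forms are recorded as complex inner product spaces, with
`∂`, `∂̄` and their formal adjoints as linear maps.
-/

noncomputable section

/-- the Dolbeault double complex of a compact Hermitian complex manifold,
with the formal adjoints of `∂` and `∂̄` with respect to a fixed reference
metric. -/
structure DolbeaultHodge where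
  /-- the space of `(p,q)`-forms -/
  V : ℕ → ℕ → Type
  [instN : ∀ p q, NormedAddCommGroup (V p q)]
  [instI : ∀ p q, InnerProductSpace ℂ (V p q)]
  /-- the operator `∂` -/
  dH : ∀ p q, V p q →ₗ[ℂ] V (p+1) q
  /-- the operator `∂̄` -/
  dA : ∀ p q, V p q →ₗ[ℂ] V p (q+1)
  /-- the formal adjoint `∂†` -/
  dHdag : ∀ p q, V (p+1) q →ₗ[ℂ] V p q
  /-- the formal adjoint `∂̄†` -/
  dAdag : ∀ p q, V p (q+1) →ₗ[ℂ] V p q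
  adj_H : ∀ p q (u : V p q) (v : V (p+1) q),
      (inner ℂ (dH p q u) v : ℂ) = inner ℂ u (dHdag p q v)
  adj_A : ∀ p q (u : V p q) (v : V p (q+1)),
      (inner ℂ (dA p q u) v : ℂ) = inner ℂ u (dAdag p q v)
  dH_sq : ∀ p q (u : V p q), dH (p+1) q (dH p q u) = 0
  dA_sq : ∀ p q (u : V p q), dA p (q+1) (dA p q u) = 0
  anticomm : ∀ p q (u : V p q), dH p (q+1) (dA p q u) = - dA (p+1) q (dH p q u)

attribute [instance] DolbeaultHodge.instN DolbeaultHodge.instI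

namespace DolbeaultHodge

variable (S : DolbeaultHodge)

/-- the Kodaira–Spencer operator
`E = ∂∂̄(∂∂̄)† + (∂∂̄)†∂∂̄ + (∂†∂̄)†∂†∂̄ + ∂†∂̄(∂†∂̄)† + ∂̄†∂̄ + ∂†∂`
on `(2,2)`-forms. -/
def KS (η : S.V 2 2) : S.V 2 2 :=
  S.dH 1 2 (S.dA 1 1 (S.dAdag 1 1 (S.dHdag 1 2 η)))
  + S.dAdag 2 2 (S.dHdag 2 3 (S.dH 2 3 (S.dA 2 2 η)))
  + S.dAdag 2 2 (S.dH 1 3 (S.dHdag 1 3 (S.dA 2 2 η)))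
  + S.dHdag 2 2 (S.dA 3 1 (S.dAdag 3 1 (S.dH 2 2 η)))
  + S.dAdag 2 2 (S.dA 2 2 η)
  + S.dHdag 2 2 (S.dH 2 2 η)

/-- `E` as a linear map. -/
def KSlin : S.V 2 2 →ₗ[ℂ] S.V 2 2 where
  toFun := S.KS
  map_add' := by intro u v; simp [KS, map_add]; abel
  map_smul' := by intro c u; simp [KS, map_smul]

/-- `∂̄†∂†η` for a `(2,2)`-form. -/
def dbarDagDdag (η : S.V 2 2) : S.V 1 1 := S.dAdag 1 1 (S.dHdag 1 2 η)

end DolbeaultHodge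

/-!
The six right-hand sides `Tr R∧R - Tr R̂ᵢ∧R̂ᵢ`, `Tr F∧F - Tr F̂ᵢ∧F̂ᵢ`,
`Tr R̂ᵢ∧R̂ᵢ - Tr F̂ᵢ∧F̂ᵢ` cancel in the alternating sum, so by linearity the
same alternating sum of the potentials lies in `ker E`.  It also lies in
`(ker E)ᗮ`, hence vanishes, and so does its image under `-i∂̄†∂†`.
-/

theorem LinearMap.eq_zero_of_mem_ker_orthogonal {𝕜 E F : Type*} [RCLike 𝕜]
    [NormedAddCommGroup E] [InnerProductSpace 𝕜 E] [AddCommGroup F] [Module 𝕜 F]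
    (f : E →ₗ[𝕜] F) {x : E} (hx : x ∈ (LinearMap.ker f)ᗮ) (hfx : f x = 0) : x = 0 :=
  Submodule.disjoint_def.mp (LinearMap.ker f).orthogonal_disjoint x hfx hx

namespace DolbeaultHodge

variable (S : DolbeaultHodge)

@[simp]
theorem KSlin_apply (η : S.V 2 2) : S.KSlin η = S.KS η := rfl

def dbarDagDdagLin : S.V 2 2 →ₗ[ℂ] S.V 1 1 := S.dAdag 1 1 ∘ₗ S.dHdag 1 2

@[simp]
theorem dbarDagDdagLin_apply (η : S.V 2 2) : S.dbarDagDdagLin η = S.dbarDagDdag η := rfl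

end DolbeaultHodge

/-!
STATEMENT 12: let `X` be a compact complex 3-fold with a holomorphic bundle
`E → X` satisfying `c₁^{BC}(E) = 0` and `c₂^{BC}(E) = c₂^{BC}(X)`, and let
`(ω, h)` solve the anomaly cancellation equation
`i∂∂̄ω = α'(Tr R_ω∧R_ω - Tr F_h∧F_h)`.  Then the Aeppli class
`𝔞(ω,h) = [ω - α'R₂[g,ĝ] + α'R₂[h,ĥ] - α'β̂] ∈ H^{1,1}_A(X,ℝ)` is
independent of the choice of reference metrics `(ω̂,ĥ)`: for two reference
pairs, `-R₂[g,ĝ₁] + R₂[g,ĝ₂] + R₂[h,ĥ₁] - R₂[h,ĥ₂] - β̂₁ + β̂₂ = 0`.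

Here `R₂[g,ĝ] = -i∂̄†∂† E⁻¹(Tr R_g∧R_g - Tr R_ĝ∧R_ĝ)` is defined via the
Kodaira–Spencer operator `E`, i.e. through the unique `γ ∈ (ker E)ᗮ` with
`E(γ) = Tr R_g∧R_g - Tr R_ĝ∧R_ĝ`; similarly for `R₂[h,ĥ]`; and
`β̂ = -i∂̄†∂†γ̂` where `E(γ̂) = Tr R_ĝ∧R_ĝ - Tr F_ĥ∧F_ĥ` (this is the
condition `c₂^{BC}(E) = c₂^{BC}(X)`).
-/

open DolbeaultHodge in
theorem aeppli_class_independent_of_reference_general (S : DolbeaultHodge)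
    -- Chern–Weil `(2,2)`-forms of `(ω,h)` and of the two reference pairs
    (trRg trFh trRg1 trRg2 trFh1 trFh2 : S.V 2 2)
    -- the Bott–Chern–Simons potentials `γ = E⁻¹(...) ∈ (ker E)ᗮ`
    (γg1 γg2 γh1 γh2 γhat1 γhat2 : S.V 2 2)
    (hγg1 : γg1 ∈ (LinearMap.ker S.KSlin)ᗮ) (hEγg1 : S.KS γg1 = trRg - trRg1)
    (hγg2 : γg2 ∈ (LinearMap.ker S.KSlin)ᗮ) (hEγg2 : S.KS γg2 = trRg - trRg2)
    (hγh1 : γh1 ∈ (LinearMap.ker S.KSlin)ᗮ) (hEγh1 : S.KS γh1 = trFh - trFh1)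
    (hγh2 : γh2 ∈ (LinearMap.ker S.KSlin)ᗮ) (hEγh2 : S.KS γh2 = trFh - trFh2)
    -- `c₂^{BC}(E) = c₂^{BC}(X)`: the potentials defining `β̂ᵢ = -i∂̄†∂†γ̂ᵢ`
    (hγhat1 : γhat1 ∈ (LinearMap.ker S.KSlin)ᗮ)
    (hEγhat1 : S.KS γhat1 = trRg1 - trFh1)
    (hγhat2 : γhat2 ∈ (LinearMap.ker S.KSlin)ᗮ)
    (hEγhat2 : S.KS γhat2 = trRg2 - trFh2) :
    -- the difference of the Aeppli representatives for the two references
    -- vanishes identically: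
    -- `-R₂[g,ĝ₁] + R₂[g,ĝ₂] + R₂[h,ĥ₁] - R₂[h,ĥ₂] - β̂₁ + β̂₂ = 0`
    -(-Complex.I • S.dbarDagDdag γg1) + (-Complex.I • S.dbarDagDdag γg2)
      + (-Complex.I • S.dbarDagDdag γh1) - (-Complex.I • S.dbarDagDdag γh2)
      - (-Complex.I • S.dbarDagDdag γhat1) + (-Complex.I • S.dbarDagDdag γhat2)
      = 0 := by
  set δ := -γg1 + γg2 + γh1 - γh2 - γhat1 + γhat2
  have hδ_perp : δ ∈ (LinearMap.ker S.KSlin)ᗮ :=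
    add_mem (sub_mem (sub_mem (add_mem (add_mem (neg_mem hγg1) hγg2) hγh1) hγh2) hγhat1) hγhat2
  have hEδ : S.KSlin δ = 0 := by
    simp only [δ, map_add, map_sub, map_neg, KSlin_apply, hEγg1, hEγg2, hEγh1, hEγh2,
      hEγhat1, hEγhat2]
    abel
  have hδ : δ = 0 := S.KSlin.eq_zero_of_mem_ker_orthogonal hδ_perp hEδ
  have h : -Complex.I • S.dbarDagDdagLin δ = 0 := by rw [hδ, map_zero, smul_zero]
  simpa only [δ, map_add, map_sub, map_neg, smul_add, smul_sub, smul_neg,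
    dbarDagDdagLin_apply] using h

open DolbeaultHodge in
theorem aeppli_class_independent_of_reference (S : DolbeaultHodge)
    -- the slope parameter
    (α : ℝ) (hα : 0 < α)
    -- `ω` and the first Chern form `Tr F_h` of `(E,h)`
    (ω : S.V 1 1) (trF1 : S.V 1 1)
    -- Chern–Weil `(2,2)`-forms of `(ω,h)` and of the two reference pairs
    (trRg trFh trRg1 trRg2 trFh1 trFh2 : S.V 2 2)
    -- `c₁^{BC}(E) = 0`
    (hc1 : ∃ u : S.V 0 0, trF1 = Complex.I • S.dH 0 1 (S.dA 0 0 u))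
    -- the anomaly cancellation equation `i∂∂̄ω = α'(Tr R∧R - Tr F∧F)`
    (hanomaly : Complex.I • S.dH 1 2 (S.dA 1 1 ω) = (α : ℂ) • (trRg - trFh))
    -- the Bott–Chern–Simons potentials `γ = E⁻¹(...) ∈ (ker E)ᗮ`
    (γg1 γg2 γh1 γh2 γhat1 γhat2 : S.V 2 2)
    (hγg1 : γg1 ∈ (LinearMap.ker S.KSlin)ᗮ) (hEγg1 : S.KS γg1 = trRg - trRg1)
    (hγg2 : γg2 ∈ (LinearMap.ker S.KSlin)ᗮ) (hEγg2 : S.KS γg2 = trRg - trRg2)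
    (hγh1 : γh1 ∈ (LinearMap.ker S.KSlin)ᗮ) (hEγh1 : S.KS γh1 = trFh - trFh1)
    (hγh2 : γh2 ∈ (LinearMap.ker S.KSlin)ᗮ) (hEγh2 : S.KS γh2 = trFh - trFh2)
    -- `c₂^{BC}(E) = c₂^{BC}(X)`: the potentials defining `β̂ᵢ = -i∂̄†∂†γ̂ᵢ`
    (hγhat1 : γhat1 ∈ (LinearMap.ker S.KSlin)ᗮ)
    (hEγhat1 : S.KS γhat1 = trRg1 - trFh1)
    (hγhat2 : γhat2 ∈ (LinearMap.ker S.KSlin)ᗮ)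
    (hEγhat2 : S.KS γhat2 = trRg2 - trFh2) :
    -- the difference of the Aeppli representatives for the two references
    -- vanishes identically:
    -- `-R₂[g,ĝ₁] + R₂[g,ĝ₂] + R₂[h,ĥ₁] - R₂[h,ĥ₂] - β̂₁ + β̂₂ = 0`
    -(-Complex.I • S.dbarDagDdag γg1) + (-Complex.I • S.dbarDagDdag γg2)
      + (-Complex.I • S.dbarDagDdag γh1) - (-Complex.I • S.dbarDagDdag γh2)
      - (-Complex.I • S.dbarDagDdag γhat1) + (-Complex.I • S.dbarDagDdag γhat2)
      = 0 :=
  aeppli_class_independent_of_reference_general S trRg trFh trRg1 trRg2 trFh1 trFh2 γg1 γg2 γh1 γh2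
    γhat1 γhat2 hγg1 hEγg1 hγg2 hEγg2 hγh1 hEγh1 hγh2 hEγh2 hγhat1 hEγhat1 hγhat2 hEγhat2
end
end

section
/- Let X be a compact Hermitian complex manifold and let E = ∂∂̄(∂∂̄)† + (∂∂̄)†∂∂̄ + (∂†∂̄)†∂†∂̄ + ∂†∂̄(∂†∂̄)† + ∂̄†∂̄ + ∂†∂ be the Kodaira–Spencer operator acting on (2,2)-forms, with adjoints taken with respect to a fixed reference metric. Then (i) ker E = { η ∈ Λ^{2,2}(X) : dη = 0 and ∂̄†∂†η = 0 }; and (ii) if χ is a (1,1)-form and γ ∈ (ker E)^⊥ is the unique solution of E(γ) = i∂∂̄χ, then dγ = 0, so that E(γ) = ∂∂̄∂̄†∂†γ = i∂∂̄χ. -/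
/-!
Write `E = ∂∂̄∂̄†∂† + E'`. Every term of `E'` begins with `∂̄†` or `∂†`, so `E'η` is orthogonal
to the image of `∂∂̄`, because `∂̄∂∂̄ = 0` and `∂∂ = 0`. Hence whenever `Eη` lies in the image
of `∂∂̄` (as it does when `Eη = 0` or `Eη = i∂∂̄χ`), so does `E'η = Eη - ∂∂̄∂̄†∂†η`, and
therefore `E'η = 0`. Pairing with `η` then gives
`0 = ‖∂∂̄η‖² + ‖∂†∂̄η‖² + ‖∂̄†∂η‖² + ‖∂̄η‖² + ‖∂η‖²`, so `∂η = ∂̄η = 0`.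
If moreover `Eη = 0`, then `∂∂̄∂̄†∂†η = 0` as well, and pairing with `η` gives `∂̄†∂†η = 0`.
-/

noncomputable section

namespace LinearMap

variable {𝕜 E F G : Type*} [RCLike 𝕜]
  [NormedAddCommGroup E] [InnerProductSpace 𝕜 E]
  [NormedAddCommGroup F] [InnerProductSpace 𝕜 F]
  [NormedAddCommGroup G] [InnerProductSpace 𝕜 G]

def IsFormalAdjoint (f : E →ₗ[𝕜] F) (g : F →ₗ[𝕜] E) : Prop :=
  ∀ u v, inner 𝕜 (f u) v = inner 𝕜 u (g v)

namespace IsFormalAdjoint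

variable {f : E →ₗ[𝕜] F} {g : F →ₗ[𝕜] E}

theorem symm (h : f.IsFormalAdjoint g) : g.IsFormalAdjoint f := fun v u => by
  rw [← inner_conj_symm, ← h, inner_conj_symm]

theorem comp {f' : F →ₗ[𝕜] G} {g' : G →ₗ[𝕜] F} (h : f.IsFormalAdjoint g)
    (h' : f'.IsFormalAdjoint g') : (f' ∘ₗ f).IsFormalAdjoint (g ∘ₗ g') := fun u w => by
  rw [comp_apply, comp_apply, h', h]

theorem re_inner_apply_self (h : f.IsFormalAdjoint g) (u : E) :
    RCLike.re (inner 𝕜 u (g (f u))) = ‖f u‖ ^ 2 := by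
  rw [← h, inner_self_eq_norm_sq]

theorem apply_eq_zero_of_adjoint_apply_eq_zero (h : f.IsFormalAdjoint g) {u : E}
    (hu : g (f u) = 0) : f u = 0 := by
  rw [← inner_self_eq_zero (𝕜 := 𝕜), h, hu, inner_zero_right]

end IsFormalAdjoint

end LinearMap

namespace DolbeaultHodge

open LinearMap

variable (S : DolbeaultHodge)

theorem isFormalAdjoint_dH (p q : ℕ) : (S.dH p q).IsFormalAdjoint (S.dHdag p q) := S.adj_H p q

theorem isFormalAdjoint_dA (p q : ℕ) : (S.dA p q).IsFormalAdjoint (S.dAdag p q) := S.adj_A p q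

theorem dA_dH_dA (p q : ℕ) (u : S.V p q) : S.dA (p+1) (q+1) (S.dH p (q+1) (S.dA p q u)) = 0 := by
  rw [S.anticomm, map_neg, S.dA_sq, neg_zero]

/-- `E - ∂∂̄∂̄†∂†`, grouped as `∂̄†(…) + ∂†(…)`. -/
def KSremainder (η : S.V 2 2) : S.V 2 2 :=
  S.dAdag 2 2 (S.dHdag 2 3 (S.dH 2 3 (S.dA 2 2 η)) + S.dH 1 3 (S.dHdag 1 3 (S.dA 2 2 η))
      + S.dA 2 2 η)
  + S.dHdag 2 2 (S.dA 3 1 (S.dAdag 3 1 (S.dH 2 2 η)) + S.dH 2 2 η)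

theorem KS_eq_add_KSremainder (η : S.V 2 2) :
    S.KS η = S.dH 1 2 (S.dA 1 1 (S.dbarDagDdag η)) + S.KSremainder η := by
  simp only [KS, KSremainder, dbarDagDdag, map_add]
  abel

theorem inner_dH_dA_KSremainder (x : S.V 1 1) (η : S.V 2 2) :
    inner ℂ (S.dH 1 2 (S.dA 1 1 x)) (S.KSremainder η) = 0 := by
  rw [KSremainder, inner_add_right, ← S.adj_A, ← S.adj_H, S.dA_dH_dA, S.dH_sq,
    inner_zero_left, inner_zero_left, add_zero]

theorem KSremainder_eq_zero_of_KS_eq_dH_dA {η : S.V 2 2} {w : S.V 1 1}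
    (h : S.KS η = S.dH 1 2 (S.dA 1 1 w)) : S.KSremainder η = 0 := by
  have hrem : S.KSremainder η = S.dH 1 2 (S.dA 1 1 (w - S.dbarDagDdag η)) := by
    rw [map_sub, map_sub, ← h, KS_eq_add_KSremainder, add_sub_cancel_left]
  rw [← inner_self_eq_zero (𝕜 := ℂ)]
  nth_rw 1 [hrem]
  exact S.inner_dH_dA_KSremainder _ η

theorem re_inner_KSremainder_self (η : S.V 2 2) :
    RCLike.re (inner ℂ η (S.KSremainder η)) =
      ‖S.dH 2 3 (S.dA 2 2 η)‖ ^ 2 + ‖S.dHdag 1 3 (S.dA 2 2 η)‖ ^ 2 + ‖S.dA 2 2 η‖ ^ 2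
        + ‖S.dAdag 3 1 (S.dH 2 2 η)‖ ^ 2 + ‖S.dH 2 2 η‖ ^ 2 := by
  rw [KSremainder, inner_add_right, ← S.adj_A, ← S.adj_H]
  simp only [inner_add_right, map_add, (S.isFormalAdjoint_dH 2 3).re_inner_apply_self,
    (S.isFormalAdjoint_dH 1 3).symm.re_inner_apply_self,
    (S.isFormalAdjoint_dA 3 1).symm.re_inner_apply_self, inner_self_eq_norm_sq]
  ring

theorem dH_eq_zero_and_dA_eq_zero_of_KSremainder_eq_zero {η : S.V 2 2}
    (h : S.KSremainder η = 0) : S.dH 2 2 η = 0 ∧ S.dA 2 2 η = 0 := by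
  have hsum := S.re_inner_KSremainder_self η
  rw [h, inner_zero_right, map_zero] at hsum
  constructor <;> rw [← norm_eq_zero, ← pow_eq_zero_iff two_ne_zero] <;>
    linarith [sq_nonneg ‖S.dH 2 3 (S.dA 2 2 η)‖, sq_nonneg ‖S.dHdag 1 3 (S.dA 2 2 η)‖,
      sq_nonneg ‖S.dAdag 3 1 (S.dH 2 2 η)‖, sq_nonneg ‖S.dA 2 2 η‖, sq_nonneg ‖S.dH 2 2 η‖]

theorem dbarDagDdag_eq_zero_of_dH_dA_eq_zero {η : S.V 2 2}
    (h : S.dH 1 2 (S.dA 1 1 (S.dbarDagDdag η)) = 0) : S.dbarDagDdag η = 0 :=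
  ((S.isFormalAdjoint_dA 1 1).comp (S.isFormalAdjoint_dH 1 2)).symm
    |>.apply_eq_zero_of_adjoint_apply_eq_zero h

end DolbeaultHodge

open DolbeaultHodge in
theorem kodaira_spencer_kernel_and_solution (S : DolbeaultHodge) :
    -- (i) the kernel of the Kodaira–Spencer operator
    ({η : S.V 2 2 | S.KS η = 0}
      = {η : S.V 2 2 | S.dH 2 2 η = 0 ∧ S.dA 2 2 η = 0 ∧ S.dbarDagDdag η = 0})
    ∧
    -- (ii) the canonical solution of `E(γ) = i∂∂̄χ` is closed
    (∀ (χ : S.V 1 1) (γ : S.V 2 2),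
      γ ∈ (LinearMap.ker S.KSlin)ᗮ →
      S.KS γ = Complex.I • S.dH 1 2 (S.dA 1 1 χ) →
      (S.dH 2 2 γ = 0 ∧ S.dA 2 2 γ = 0
        ∧ S.KS γ = S.dH 1 2 (S.dA 1 1 (S.dbarDagDdag γ)))) := by
  refine ⟨Set.ext fun η => ⟨fun (h : S.KS η = 0) => ?_, fun ⟨hH, hA, hD⟩ => ?_⟩,
    fun χ γ _ hγ => ?_⟩
  · have hrem := S.KSremainder_eq_zero_of_KS_eq_dH_dA (w := 0) (by rw [h, map_zero, map_zero])
    obtain ⟨hH, hA⟩ := S.dH_eq_zero_and_dA_eq_zero_of_KSremainder_eq_zero hrem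
    rw [KS_eq_add_KSremainder, hrem, add_zero] at h
    exact ⟨hH, hA, S.dbarDagDdag_eq_zero_of_dH_dA_eq_zero h⟩
  · simp [KS_eq_add_KSremainder, KSremainder, hH, hA, hD]
  · have hrem := S.KSremainder_eq_zero_of_KS_eq_dH_dA (w := Complex.I • χ)
      (by rw [hγ, map_smul, map_smul])
    obtain ⟨hH, hA⟩ := S.dH_eq_zero_and_dA_eq_zero_of_KSremainder_eq_zero hrem
    exact ⟨hH, hA, by rw [KS_eq_add_KSremainder, hrem, add_zero]⟩
end
end
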